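/- The floating-point computation of a product P = ∏_{i=1}^{n} s(i) of n nonnegative factors, where each factor is represented with relative error at most ε and each multiplication propagates the sum of argument errors plus 2 units of rounding error, yields an approximation P̂ with δ[P̂, P] ≤ (3n - 2)·ε, provided n ≤ 1/(2√ε). -/

import Mathlib

/-! Errors are carried in the form `|x̂ - x| ≤ c * |x|`, which (unlike `relErr`) needs no case split
at zero and propagates through a product without sign conditions: factors with errors `s * ε` and
`t * ε`, multiplied with one rounding, give `(s + t + 2) * ε` as long as
`(s + t + s * t * (1 + ε)) * ε ≤ 1`. Along a product tree `(3k - 2) + (3m - 2) + 2 = 3(k + m) - 2`,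
and the side condition follows from `4 * n ^ 2 * ε ≤ 1`, i.e. from `n ≤ 1 / (2 * √ε)`. -/

/-- Relative approximation error. -/
noncomputable def relErr (xh x : ℝ) : ℝ :=
  if x = 0 then (if xh = 0 then 0 else 1) else |xh - x| / |x|

/-- A product tree: an arbitrary association of binary multiplications over
indexed factors. -/
inductive PTree : Type where
  | leaf : ℕ → PTree
  | mul : PTree → PTree → PTree

namespace PTree

/-- Number of factors. -/
def size : PTree → ℕ
  | leaf _ => 1
  | mul a b => size a + size b

/-- Exact value of the product given the factors `s`. -/
def eval (s : ℕ → ℝ) : PTree → ℝ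
  | leaf i => s i
  | mul a b => eval s a * eval s b

end PTree

lemma PTree.one_le_size (t : PTree) : 1 ≤ t.size := by
  induction t with
  | leaf => rfl
  | mul a b _ _ => simp only [PTree.size]; omega

lemma abs_sub_le_of_relErr_le {xh x c : ℝ} (hc : c < 1) (h : relErr xh x ≤ c) :
    |xh - x| ≤ c * |x| := by
  unfold relErr at h
  by_cases hx : x = 0
  · by_cases hxh : xh = 0
    · simp [hx, hxh]
    · simp only [hx, hxh, if_true, if_false] at h
      linarith
  · rwa [if_neg hx, div_le_iff₀ (abs_pos.mpr hx)] at h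

lemma relErr_le_of_abs_sub_le {xh x c : ℝ} (hc : 0 ≤ c) (h : |xh - x| ≤ c * |x|) :
    relErr xh x ≤ c := by
  unfold relErr
  by_cases hx : x = 0
  · have hxh : xh = 0 := by simpa [hx] using h
    simpa [hx, hxh] using hc
  · rwa [if_neg hx, div_le_iff₀ (abs_pos.mpr hx)]

lemma abs_mul_sub_mul_le {xh x yh y a b : ℝ} (hx : |xh - x| ≤ a * |x|)
    (hy : |yh - y| ≤ b * |y|) : |xh * yh - x * y| ≤ (a + b + a * b) * |x * y| := by
  have ha : 0 ≤ a * |x| := (abs_nonneg _).trans hx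
  have hb : 0 ≤ b * |y| := (abs_nonneg _).trans hy
  calc |xh * yh - x * y| = |(xh - x) * (yh - y) + (xh - x) * y + x * (yh - y)| := by ring_nf
    _ ≤ |xh - x| * |yh - y| + |xh - x| * |y| + |x| * |yh - y| := by
      simp only [← abs_mul]; exact abs_add_three _ _ _
    _ ≤ (a * |x|) * (b * |y|) + (a * |x|) * |y| + |x| * (b * |y|) := by
      gcongr
    _ = (a + b + a * b) * |x * y| := by rw [abs_mul]; ring

lemma abs_sub_mul_le_of_abs_sub_le {xh x yh y z a b ε : ℝ} (hε : 0 ≤ ε)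
    (hx : |xh - x| ≤ a * |x|) (hy : |yh - y| ≤ b * |y|) (hz : |z - xh * yh| ≤ ε * |xh * yh|) :
    |z - x * y| ≤ (a + b + a * b + ε * (1 + a) * (1 + b)) * |x * y| := by
  have hxh : |xh| ≤ (1 + a) * |x| := by
    linarith [abs_sub_abs_le_abs_sub xh x]
  have hyh : |yh| ≤ (1 + b) * |y| := by
    linarith [abs_sub_abs_le_abs_sub yh y]
  calc |z - x * y| ≤ |z - xh * yh| + |xh * yh - x * y| := abs_sub_le _ _ _
    _ ≤ ε * (|xh| * |yh|) + (a + b + a * b) * |x * y| := by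
      rw [← abs_mul]; gcongr; exact abs_mul_sub_mul_le hx hy
    _ ≤ ε * (((1 + a) * |x|) * ((1 + b) * |y|)) + (a + b + a * b) * |x * y| := by
      gcongr
      exact (abs_nonneg _).trans hxh
    _ = (a + b + a * b + ε * (1 + a) * (1 + b)) * |x * y| := by rw [abs_mul]; ring

lemma abs_sub_mul_le_add_add_two {xh x yh y z s t ε : ℝ} (hε : 0 ≤ ε)
    (hst : (s + t + s * t * (1 + ε)) * ε ≤ 1)
    (hx : |xh - x| ≤ s * ε * |x|) (hy : |yh - y| ≤ t * ε * |y|)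
    (hz : |z - xh * yh| ≤ ε * |xh * yh|) :
    |z - x * y| ≤ (s + t + 2) * ε * |x * y| := by
  refine (abs_sub_mul_le_of_abs_sub_le hε hx hy hz).trans ?_
  gcongr
  nlinarith [mul_nonneg hε (sub_nonneg.mpr hst)]

lemma three_mul_sub_two_mul_le_one {k m ε : ℝ} (hk : 1 ≤ k) (hm : 1 ≤ m) (hε : 0 ≤ ε)
    (h : 4 * (k + m) ^ 2 * ε ≤ 1) :
    ((3 * k - 2) + (3 * m - 2) + (3 * k - 2) * (3 * m - 2) * (1 + ε)) * ε ≤ 1 := by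
  nlinarith [sq_nonneg (k - m), mul_nonneg hε (sq_nonneg (k - m)),
    mul_nonneg (mul_nonneg hε hε) (sq_nonneg (k - m))]

lemma PTree.abs_sub_eval_le {s : ℕ → ℝ} {Ph : PTree → ℝ} {ε : ℝ} (hε : 0 ≤ ε)
    (hleaf : ∀ i, |Ph (.leaf i) - s i| ≤ ε * |s i|)
    (hmul : ∀ a b, |Ph (.mul a b) - Ph a * Ph b| ≤ ε * |Ph a * Ph b|)
    (t : PTree) (ht : 4 * (t.size : ℝ) ^ 2 * ε ≤ 1) :
    |Ph t - t.eval s| ≤ (3 * (t.size : ℝ) - 2) * ε * |t.eval s| := by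
  induction t with
  | leaf i => norm_num [PTree.size, PTree.eval]; exact hleaf i
  | mul a b iha ihb =>
    have hka : (1 : ℝ) ≤ a.size := mod_cast a.one_le_size
    have hkb : (1 : ℝ) ≤ b.size := mod_cast b.one_le_size
    simp only [PTree.size, PTree.eval, Nat.cast_add] at ht ⊢
    have ha := iha (le_trans (by gcongr; linarith) ht)
    have hb := ihb (le_trans (by gcongr; linarith) ht)
    have hprod := abs_sub_mul_le_add_add_two hε (three_mul_sub_two_mul_le_one hka hkb hε ht)
      ha hb (hmul a b)
    linarith

lemma four_mul_sq_mul_le_one {n ε : ℝ} (hn0 : 0 ≤ n) (hε : 0 ≤ ε)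
    (hn : n ≤ 1 / (2 * √ε)) : 4 * n ^ 2 * ε ≤ 1 := by
  have h : 2 * √ε * n ≤ 1 := by
    rcases (Real.sqrt_nonneg ε).eq_or_lt with h0 | hpos
    · simp [← h0]
    · rwa [le_div_iff₀ (by positivity), mul_comm] at hn
  calc 4 * n ^ 2 * ε = (2 * √ε * n) ^ 2 := by rw [mul_pow, mul_pow, Real.sq_sqrt hε]; ring
    _ ≤ 1 := by nlinarith [mul_nonneg (Real.sqrt_nonneg ε) hn0]

theorem product_error_bound_general
    (s : ℕ → ℝ) (Ph : PTree → ℝ) (ε : ℝ) (hε : 0 < ε)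
    (hleaf : ∀ i, relErr (Ph (.leaf i)) (s i) ≤ ε)
    (hmul : ∀ a b, |Ph (.mul a b) - Ph a * Ph b| ≤ ε * |Ph a * Ph b|)
    (t : PTree) (hn : ((t.size : ℝ)) ≤ 1 / (2 * Real.sqrt ε)) :
    relErr (Ph t) (t.eval s) ≤ (3 * (t.size : ℝ) - 2) * ε := by
  have hsize : (1 : ℝ) ≤ t.size := mod_cast t.one_le_size
  have ht := four_mul_sq_mul_le_one (by linarith) hε.le hn
  have hε1 : ε < 1 := by nlinarith
  refine relErr_le_of_abs_sub_le (by nlinarith) ?_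
  exact PTree.abs_sub_eval_le hε.le (fun i => abs_sub_le_of_relErr_le hε1 (hleaf i)) hmul t ht

/-- Lemma 2: a floating-point computation of a product of `n` nonnegative factors,
with each factor represented with relative error at most `ε` and each
multiplication rounded with relative error at most `ε`, has relative error at most
`(3n - 2)·ε`, provided `n ≤ 1/(2√ε)`. -/
theorem product_error_bound
    (s : ℕ → ℝ) (Ph : PTree → ℝ) (ε : ℝ) (hε : 0 < ε)
    (hspos : ∀ i, 0 ≤ s i)
    (hleaf : ∀ i, relErr (Ph (.leaf i)) (s i) ≤ ε)
    (hmul : ∀ a b, |Ph (.mul a b) - Ph a * Ph b| ≤ ε * |Ph a * Ph b|)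
    (t : PTree) (hn : ((t.size : ℝ)) ≤ 1 / (2 * Real.sqrt ε)) :
    relErr (Ph t) (t.eval s) ≤ (3 * (t.size : ℝ) - 2) * ε :=
  product_error_bound_general s Ph ε hε hleaf hmul t hn
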